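/- arXiv:2006.01455 — 2 statements merged into one kernel-verified Lean document; each statement's English description precedes it below -/
import Mathlib

section
/- Tensor-factorization of sampled algebraic polynomials: for any univariate polynomial p of degree at most n, any L ∈ ℕ and ℓ ∈ {1,…,L−1}, the vector of values (p((j−1/2)·2^{-L}))_{j=1}^{2^L} ∈ ℂ^{2^L}, viewed as an element of ℂ^{2^ℓ} ⊗ ℂ^{2^{L−ℓ}} via j = (j₁−1)·2^{L−ℓ} + j₂, lies in the tensor product P' ⊗ P'' of two subspaces each of dimension at most n+1, namely the spaces spanned by samples of polynomials of degree ≤ n on the coarse grid and on the fine subgrid respectively. -/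
open Finset Polynomial

/-
The Taylor expansion `p (x + y) = ∑ₖ (Dᵏ p / k!) (x) · yᵏ`, written with Hasse derivatives, separates
the coarse coordinate `x = j₁ 2^{-ℓ}` from the fine one `y = (j₂ + 1/2) 2^{-L}`: it is a sum of `n + 1`
products of a polynomial of degree `≤ n` in `x` and the monomial `yᵏ`.
-/

theorem Polynomial.eval_add_eq_sum_hasseDeriv_mul_pow {R : Type*} [CommSemiring R] {p : R[X]}
    {n : ℕ} (hp : p.natDegree ≤ n) (x y : R) :
    p.eval (x + y) = ∑ k : Fin (n + 1), (hasseDeriv k p).eval x * y ^ (k : ℕ) := by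
  have hdeg : (taylor x p).natDegree < n + 1 := by
    rw [natDegree_taylor]
    exact Nat.lt_succ_of_le hp
  rw [add_comm, ← taylor_eval, eval_eq_sum_range' hdeg, ← Fin.sum_univ_eq_sum_range]
  simp only [taylor_coeff]

theorem stmt_8_general (n L ℓ : ℕ)
    (p : Polynomial ℂ) (hp : p.natDegree ≤ n) :
    ∃ q r : Fin (n + 1) → Polynomial ℂ,
      (∀ k, (q k).natDegree ≤ n) ∧ (∀ k, (r k).natDegree ≤ n) ∧
      ∀ (j₁ : Fin (2 ^ ℓ)) (j₂ : Fin (2 ^ (L - ℓ))),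
        p.eval (((j₁ : ℕ) : ℂ) * (2:ℂ) ^ (-(ℓ:ℤ)) + (((j₂ : ℕ) : ℂ) + 1/2) * (2:ℂ) ^ (-(L:ℤ)))
          = ∑ k : Fin (n + 1),
              (q k).eval (((j₁ : ℕ) : ℂ) * (2:ℂ) ^ (-(ℓ:ℤ))) *
                (r k).eval ((((j₂ : ℕ) : ℂ) + 1/2) * (2:ℂ) ^ (-(L:ℤ))) := by
  refine ⟨fun k => hasseDeriv k p, fun k => X ^ (k : ℕ), fun k => ?_, fun k => ?_,
    fun j₁ j₂ => ?_⟩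
  · exact (natDegree_hasseDeriv_le p k).trans ((Nat.sub_le _ _).trans hp)
  · exact (natDegree_X_pow_le _).trans (Nat.lt_succ_iff.mp k.isLt)
  · simp only [eval_pow, eval_X]
    exact eval_add_eq_sum_hasseDeriv_mul_pow hp _ _

/-- Tensor-factorization of sampled algebraic polynomials: the vector of values
of a polynomial `p` of degree `≤ n` at the midpoints `(j−1/2)·2^{-L}`,
`j = 1,…,2^L`, viewed on `ℂ^{2^ℓ} ⊗ ℂ^{2^{L−ℓ}}` via `j = (j₁−1)·2^{L−ℓ} + j₂`
(here with 0-based indices `j₁, j₂`), lies in the tensor product of the span of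
samples of polynomials of degree `≤ n` on the coarse grid with the span of
samples of polynomials of degree `≤ n` on the fine subgrid; each factor
subspace has dimension at most `n+1`. -/
theorem stmt_8 (n L ℓ : ℕ) (hℓ : 1 ≤ ℓ) (hℓL : ℓ < L)
    (p : Polynomial ℂ) (hp : p.natDegree ≤ n) :
    ∃ q r : Fin (n + 1) → Polynomial ℂ,
      (∀ k, (q k).natDegree ≤ n) ∧ (∀ k, (r k).natDegree ≤ n) ∧
      ∀ (j₁ : Fin (2 ^ ℓ)) (j₂ : Fin (2 ^ (L - ℓ))),
        p.eval (((j₁ : ℕ) : ℂ) * (2:ℂ) ^ (-(ℓ:ℤ)) + (((j₂ : ℕ) : ℂ) + 1/2) * (2:ℂ) ^ (-(L:ℤ)))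
          = ∑ k : Fin (n + 1),
              (q k).eval (((j₁ : ℕ) : ℂ) * (2:ℂ) ^ (-(ℓ:ℤ))) *
                (r k).eval ((((j₂ : ℕ) : ℂ) + 1/2) * (2:ℂ) ^ (-(L:ℤ))) :=
  stmt_8_general n L ℓ p hp
end

section
/- Averaging is an L²-contraction after unfolding normalization: let ε = 2^{-λ} with λ ∈ ℕ, D = Y = (0,1), and define the averaging operator (𝒰^ε Φ)(x) = ∫_0^1 Φ(ε⌊x/ε⌋ + εz, {x/ε}) dz for Φ ∈ L²(D × Y), where {t} denotes the fractional part. Then ‖𝒰^ε Φ‖_{L²(D)} ≤ ‖Φ‖_{L²(D×Y)} for all Φ ∈ L²(D×Y). -/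
/-!
Pointwise, Jensen's inequality on the probability space `(0,1)` bounds the square of the
inner average by the average of the square, so it suffices to prove, for every measurable
`F ≥ 0`, the unfolding identity `∫∫ F(ε⌊x/ε⌋ + εz, {x/ε}) dz dx = ∫∫ F(x, y) dy dx`.
Splitting `(0,1)` into the `N = 1/ε` cells `[kε, (k+1)ε)` and rescaling each cell onto `(0,1)`
turns both sides into `ε ∑ₖ ∫∫ F(εk + εz, y) dz dy`: on the left the rescaled cell variable is
the fast variable `y = {x/ε}`, on the right it is the slow variable `x` itself. Working in
`ℝ≥0∞` avoids all integrability side conditions until the final comparison.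
-/

open MeasureTheory Set
open scoped ENNReal NNReal

lemma ofReal_sq_integral_le_lintegral {α : Type*} [MeasurableSpace α] (μ : Measure α)
    [IsProbabilityMeasure μ] (f : α → ℝ) :
    ENNReal.ofReal ((∫ a, f a ∂μ) ^ 2) ≤ ∫⁻ a, ENNReal.ofReal (f a ^ 2) ∂μ := by
  by_cases hf : Integrable f μ
  swap
  · simp [integral_undef hf]
  have hsq : ∀ t : ℝ, ENNReal.ofReal (t ^ 2) = ‖t‖ₑ ^ (2 : ℝ) := fun t => by
    rw [Real.enorm_eq_ofReal_abs, ENNReal.ofReal_rpow_of_nonneg (abs_nonneg t) zero_le_two]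
    norm_num
  calc ENNReal.ofReal ((∫ a, f a ∂μ) ^ 2) = ‖∫ a, f a ∂μ‖ₑ ^ (2 : ℝ) := hsq _
    _ ≤ eLpNorm f 1 μ ^ (2 : ℝ) := by
        rw [eLpNorm_one_eq_lintegral_enorm]
        gcongr
        exact enorm_integral_le_lintegral_enorm f
    _ ≤ eLpNorm f (2 : ℝ≥0) μ ^ (2 : ℝ) := by
        gcongr
        exact eLpNorm_le_eLpNorm_of_exponent_le (by norm_num) hf.aestronglyMeasurable
    _ = ∫⁻ a, ENNReal.ofReal (f a ^ 2) ∂μ := by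
        have h2 := eLpNorm_nnreal_pow_eq_lintegral (μ := μ) (f := f) (p := 2) two_ne_zero
        rw [NNReal.coe_ofNat] at h2
        simp only [h2, hsq]

lemma setLIntegral_image_affineHomeomorph {a : ℝ} (ha : 0 < a) (b : ℝ) (g : ℝ → ℝ≥0∞) (s : Set ℝ) :
    ∫⁻ x in affineHomeomorph a b ha.ne' '' s, g x
      = ENNReal.ofReal a * ∫⁻ t in s, g (a * t + b) := by
  have hmp :
      MeasurePreserving (affineHomeomorph a b ha.ne') (ENNReal.ofReal a • volume) volume := by
    refine ⟨(affineHomeomorph a b ha.ne').continuous.measurable, ?_⟩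
    have : affineHomeomorph a b ha.ne' = (· + b) ∘ (a * ·) := rfl
    have hscale := Real.smul_map_volume_mul_left ha.ne'
    rw [abs_of_pos ha] at hscale
    rw [this, ← Measure.map_map (measurable_add_const b) (measurable_const_mul a),
      Measure.map_smul, hscale, map_add_right_eq_self]
  rw [← hmp.setLIntegral_comp_emb (affineHomeomorph a b ha.ne').measurableEmbedding,
    Measure.restrict_smul, lintegral_smul_measure, smul_eq_mul]
  rfl

lemma setLIntegral_Ico_zero_nat_mul_eq_sum (g : ℝ → ℝ≥0∞) {δ : ℝ} (hδ : 0 ≤ δ) (N : ℕ) :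
    ∫⁻ x in Ico 0 (N * δ), g x = ∑ k ∈ Finset.range N, ∫⁻ x in Ico (k * δ) ((k + 1) * δ), g x := by
  induction N with
  | zero => simp
  | succ n ih =>
    have hunion : Ico 0 (n * δ) ∪ Ico (n * δ) ((n + 1) * δ) = Ico (0 : ℝ) ((n + 1 : ℕ) * δ) := by
      push_cast
      exact Ico_union_Ico_eq_Ico (by positivity) (by nlinarith)
    rw [Finset.sum_range_succ, ← ih, ← hunion,
      lintegral_union measurableSet_Ico Ico_disjoint_Ico_same]

lemma setLIntegral_Ioo_zero_one_eq_sum_cells {ε : ℝ} {N : ℕ} (hN : N * ε = 1) (g : ℝ → ℝ≥0∞) :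
    ∫⁻ x in Ioo 0 1, g x
      = ∑ k ∈ Finset.range N, ENNReal.ofReal ε * ∫⁻ t in Ioo 0 1, g (ε * k + ε * t) := by
  have hε : 0 < ε := pos_of_mul_pos_right (hN ▸ one_pos) N.cast_nonneg
  have hIoo : ∫⁻ x in Ioo 0 1, g x = ∫⁻ x in Ico 0 (N * ε), g x := by
    rw [hN, Measure.restrict_congr_set Ioo_ae_eq_Ico]
  rw [hIoo, setLIntegral_Ico_zero_nat_mul_eq_sum g hε.le]
  refine Finset.sum_congr rfl fun k _ => ?_
  have hcell : Ico (k * ε) ((k + 1) * ε) = affineHomeomorph ε (ε * k) hε.ne' '' Ico 0 1 := by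
    rw [affineHomeomorph_image_Ico _ _ _ _ hε]
    ring_nf
  rw [hcell, setLIntegral_image_affineHomeomorph hε, Measure.restrict_congr_set Ioo_ae_eq_Ico]
  simp only [add_comm]

lemma floor_and_fract_of_mem_cell {ε : ℝ} (hε : 0 < ε) (k : ℕ) {t : ℝ} (ht : t ∈ Ioo (0 : ℝ) 1) :
    ⌊(ε * k + ε * t) / ε⌋ = k ∧ Int.fract ((ε * k + ε * t) / ε) = t := by
  have hdiv : (ε * k + ε * t) / ε = k + t := by field_simp
  rw [hdiv, Int.floor_natCast_add, Int.fract_natCast_add, Int.floor_eq_zero_iff.mpr ⟨ht.1.le, ht.2⟩,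
    Int.fract_eq_self.mpr ⟨ht.1.le, ht.2⟩]
  simp

theorem setLIntegral_unfold_eq {ε : ℝ} {N : ℕ} (hN : N * ε = 1) (F : ℝ → ℝ → ℝ≥0∞)
    (hF : Measurable (Function.uncurry F)) :
    ∫⁻ x in Ioo 0 1, ∫⁻ z in Ioo 0 1, F (ε * ⌊x / ε⌋ + ε * z) (Int.fract (x / ε))
      = ∫⁻ x in Ioo 0 1, ∫⁻ y in Ioo 0 1, F x y := by
  have hε : 0 < ε := pos_of_mul_pos_right (hN ▸ one_pos) N.cast_nonneg
  have hslice (k : ℕ) : Measurable fun y => ∫⁻ z in Ioo 0 1, F (ε * k + ε * z) y :=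
    Measurable.lintegral_prod_right (f := fun y z => F (ε * k + ε * z) y)
      (hF.comp (by fun_prop : Measurable fun p : ℝ × ℝ => (ε * k + ε * p.2, p.1)))
  calc _ = ∑ k ∈ Finset.range N,
        ENNReal.ofReal ε * ∫⁻ y in Ioo 0 1, ∫⁻ z in Ioo 0 1, F (ε * k + ε * z) y := by
        rw [setLIntegral_Ioo_zero_one_eq_sum_cells hN]
        refine Finset.sum_congr rfl fun k _ => ?_
        congr 1
        refine setLIntegral_congr_fun measurableSet_Ioo fun t ht => ?_
        obtain ⟨hfloor, hfract⟩ := floor_and_fract_of_mem_cell hε k ht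
        rw [hfloor, hfract]
        rfl
    _ = ∫⁻ y in Ioo 0 1, ∑ k ∈ Finset.range N,
        ENNReal.ofReal ε * ∫⁻ z in Ioo 0 1, F (ε * k + ε * z) y := by
        rw [lintegral_finsetSum _ fun k _ => (hslice k).const_mul _]
        simp only [lintegral_const_mul' _ _ ENNReal.ofReal_ne_top]
    _ = ∫⁻ y in Ioo 0 1, ∫⁻ x in Ioo 0 1, F x y :=
        lintegral_congr fun y => (setLIntegral_Ioo_zero_one_eq_sum_cells hN (F · y)).symm
    _ = _ := lintegral_lintegral_swap (hF.comp measurable_swap).aemeasurable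

instance isProbabilityMeasure_restrict_Ioo_zero_one :
    IsProbabilityMeasure (volume.restrict (Ioo (0 : ℝ) 1)) :=
  ⟨by simp⟩

theorem integral_sq_unfold_le {ε : ℝ} {N : ℕ} (hN : N * ε = 1) (Φ : ℝ → ℝ → ℝ)
    (hmeas : Measurable (Function.uncurry Φ))
    (hint : Integrable (fun q : ℝ × ℝ => Φ q.1 q.2 ^ 2)
      ((volume.restrict (Ioo 0 1)).prod (volume.restrict (Ioo 0 1)))) :
    ∫ x in Ioo 0 1, (∫ z in Ioo 0 1, Φ (ε * ⌊x / ε⌋ + ε * z) (Int.fract (x / ε))) ^ 2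
      ≤ ∫ x in Ioo 0 1, ∫ y in Ioo 0 1, Φ x y ^ 2 := by
  set F : ℝ → ℝ → ℝ≥0∞ := fun x y => ENNReal.ofReal (Φ x y ^ 2)
  have hF : Measurable (Function.uncurry F) := (hmeas.pow_const 2).ennreal_ofReal
  have hunfold : Measurable fun p : ℝ × ℝ => (ε * ⌊p.1 / ε⌋ + ε * p.2, Int.fract (p.1 / ε)) := by
    measurability
  have hprod : ∫⁻ q, ENNReal.ofReal (Φ q.1 q.2 ^ 2)
      ∂((volume.restrict (Ioo 0 1)).prod (volume.restrict (Ioo 0 1)))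
      = ∫⁻ x in Ioo 0 1, ∫⁻ y in Ioo 0 1, F x y :=
    lintegral_prod (Function.uncurry F) hF.aemeasurable
  have hRHS : ∫ x in Ioo 0 1, ∫ y in Ioo 0 1, Φ x y ^ 2
      = (∫⁻ x in Ioo 0 1, ∫⁻ y in Ioo 0 1, F x y).toReal := by
    rw [← integral_prod _ hint, ← hprod,
      integral_eq_lintegral_of_nonneg_ae (ae_of_all _ fun _ => sq_nonneg _) hint.1]
  have hfin : ∫⁻ x in Ioo 0 1, ∫⁻ y in Ioo 0 1, F x y ≠ ⊤ :=
    hprod ▸ hint.lintegral_lt_top.ne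
  have hLHS : AEStronglyMeasurable
      (fun x => (∫ z in Ioo 0 1, Φ (ε * ⌊x / ε⌋ + ε * z) (Int.fract (x / ε))) ^ 2)
      (volume.restrict (Ioo 0 1)) :=
    ((hmeas.comp hunfold).stronglyMeasurable.integral_prod_right'.aestronglyMeasurable).pow 2
  rw [integral_eq_lintegral_of_nonneg_ae (ae_of_all _ fun _ => sq_nonneg _) hLHS, hRHS]
  refine ENNReal.toReal_mono hfin ?_
  calc _ ≤ ∫⁻ x in Ioo 0 1, ∫⁻ z in Ioo 0 1, F (ε * ⌊x / ε⌋ + ε * z) (Int.fract (x / ε)) :=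
        lintegral_mono fun x => ofReal_sq_integral_le_lintegral _ _
    _ = _ := setLIntegral_unfold_eq hN F hF

/-- The averaging (folding) operator is an `L²`-contraction: with
`ε = 2^{-λ}`, `D = Y = (0,1)` and
`(𝒰^ε Φ)(x) = ∫_0^1 Φ(ε⌊x/ε⌋ + εz, {x/ε}) dz`, one has
`‖𝒰^ε Φ‖_{L²(D)} ≤ ‖Φ‖_{L²(D×Y)}` for all `Φ ∈ L²(D×Y)`. -/
theorem stmt_18 (l : ℕ) (Φ : ℝ → ℝ → ℝ)
    (hmeas : Measurable (Function.uncurry Φ))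
    (hint : Integrable (fun q : ℝ × ℝ => (Φ q.1 q.2) ^ 2)
      ((volume.restrict (Set.Ioo (0:ℝ) 1)).prod (volume.restrict (Set.Ioo (0:ℝ) 1)))) :
    ∫ x in Set.Ioo (0:ℝ) 1,
        (∫ z in Set.Ioo (0:ℝ) 1,
            Φ ((2:ℝ) ^ (-(l:ℤ)) * ((⌊x / (2:ℝ) ^ (-(l:ℤ))⌋ : ℤ) : ℝ)
                + (2:ℝ) ^ (-(l:ℤ)) * z)
              (Int.fract (x / (2:ℝ) ^ (-(l:ℤ))))) ^ 2
      ≤ ∫ x in Set.Ioo (0:ℝ) 1, ∫ y in Set.Ioo (0:ℝ) 1, (Φ x y) ^ 2 := by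
  refine integral_sq_unfold_le (N := 2 ^ l) ?_ Φ hmeas hint
  push_cast
  rw [zpow_neg, zpow_natCast, mul_inv_cancel₀ (by positivity)]
end
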